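/- arXiv:math/0605174 — 5 statements merged into one kernel-verified Lean document; each statement's English description precedes it below -/
import Mathlib

section
/- Let A = C[y_1,...,y_m], F = C[x_1,...,x_n], and f: F → A a ring homomorphism with kernel I. Let F' = C[x_1,...,x_s] ⊂ F with F' ∩ I = {0}, fix the lexicographic monomial ordering with x_1 < ... < x_n and a corresponding Gröbner basis B of I. Let A' = f(F), A'' = f(F'), and suppose A''' is a subring with A'' ⊂ A''' ⊂ A' such that for every ω ∈ A''' of positive degree, the normal form (with respect to B) of any preimage of ω contains a monomial lying in F' with nonzero coefficient. Then A''' = A''. -/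
open MvPolynomial

/-- The lexicographic order on monomials corresponding to the variable ordering
`x_1 < x_2 < ⋯ < x_n` (the variable with the largest index dominates). -/
def lexLe {n : ℕ} (a b : Fin n →₀ ℕ) : Prop :=
  toLex (Finsupp.equivMapDomain (Fin.revPerm : Fin n ≃ Fin n) a) ≤
    toLex (Finsupp.equivMapDomain (Fin.revPerm : Fin n ≃ Fin n) b)

/-- `m` is the leading monomial of `f` for the lexicographic order. -/
def IsLeadMon {n : ℕ} (f : MvPolynomial (Fin n) ℂ) (m : Fin n →₀ ℕ) : Prop :=
  m ∈ f.support ∧ ∀ m' ∈ f.support, lexLe m' m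

/-- `f` lies in the subring `F' = C[x_1, …, x_s]`. -/
def OnlySmall {n : ℕ} (s : ℕ) (f : MvPolynomial (Fin n) ℂ) : Prop :=
  ∀ m ∈ f.support, ∀ j : Fin n, s ≤ (j : ℕ) → m j = 0

/-- `B` is a Gröbner basis of `I` for the lexicographic order. -/
def IsGroebner {n : ℕ} (I : Ideal (MvPolynomial (Fin n) ℂ))
    (B : Finset (MvPolynomial (Fin n) ℂ)) : Prop :=
  (∀ g ∈ B, g ∈ I ∧ g ≠ 0) ∧ Ideal.span (B : Set (MvPolynomial (Fin n) ℂ)) = I ∧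
  ∀ f ∈ I, f ≠ 0 → ∀ m, IsLeadMon f m → ∃ g ∈ B, ∃ mg, IsLeadMon g mg ∧ mg ≤ m

/-- `r` is in normal form with respect to `B`: no monomial of `r` is divisible by the leading
term of any element of `B`. -/
def IsNormalForm {n : ℕ} (B : Finset (MvPolynomial (Fin n) ℂ))
    (r : MvPolynomial (Fin n) ℂ) : Prop :=
  ∀ m ∈ r.support, ∀ g ∈ B, ∀ mg, IsLeadMon g mg → ¬ mg ≤ m

/-- The order-embedding of monomials into the lexicographic type. -/
noncomputable def emb {n : ℕ} (a : Fin n →₀ ℕ) : Lex (Fin n →₀ ℕ) :=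
  toLex (Finsupp.equivMapDomain (Fin.revPerm : Fin n ≃ Fin n) a)

lemma lexLe_iff_emb {n : ℕ} (a b : Fin n →₀ ℕ) : lexLe a b ↔ emb a ≤ emb b := Iff.rfl

lemma emb_injective {n : ℕ} : Function.Injective (emb (n := n)) := by
  intro a b h
  exact (Finsupp.equivCongrLeft (Fin.revPerm : Fin n ≃ Fin n)).injective (toLex.injective h)

lemma emb_add {n : ℕ} (a b : Fin n →₀ ℕ) : emb (a + b) = emb a + emb b := by
  apply congrArg toLex
  ext j
  change (Finsupp.equivMapDomain (Fin.revPerm : Fin n ≃ Fin n) (a + b)) j =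
    (Finsupp.equivMapDomain (Fin.revPerm : Fin n ≃ Fin n) a
      + Finsupp.equivMapDomain (Fin.revPerm : Fin n ≃ Fin n) b) j
  simp [Finsupp.equivMapDomain_apply]

/-- Existence of a normal form: division algorithm with respect to `B`. -/
lemma nf_exists {n m : ℕ}
    (f : MvPolynomial (Fin n) ℂ →ₐ[ℂ] MvPolynomial (Fin m) ℂ)
    (B : Finset (MvPolynomial (Fin n) ℂ)) (hBk : ∀ g ∈ B, f g = 0)
    (q : MvPolynomial (Fin n) ℂ) :
    ∃ r, f r = f q ∧ IsNormalForm B r := by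
  classical
  set Red : (Fin n →₀ ℕ) → Prop :=
    fun m' => ∃ g ∈ B, ∃ mg, IsLeadMon g mg ∧ mg ≤ m' with hRed
  have aux : ∀ v : Lex (Fin n →₀ ℕ), ∀ q : MvPolynomial (Fin n) ℂ,
      (∀ m' ∈ q.support, Red m' → emb m' ≤ v) → ∃ r, f r = f q ∧ IsNormalForm B r := by
    intro v
    induction v using WellFoundedLT.induction with
    | _ v IH =>
      intro q hq
      by_cases hred : ∃ m₀ ∈ q.support, Red m₀
      · obtain ⟨m₀, hm₀q, hm₀r⟩ := hred
        have hne : (q.support.filter Red).Nonempty :=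
          ⟨m₀, Finset.mem_filter.mpr ⟨hm₀q, hm₀r⟩⟩
        obtain ⟨mx, hmxS, hmax⟩ := Finset.exists_max_image (q.support.filter Red) emb hne
        obtain ⟨hmxq, g, hgB, mg, hlmg, hmgle⟩ :
            mx ∈ q.support ∧ ∃ g ∈ B, ∃ mg, IsLeadMon g mg ∧ mg ≤ mx := by
          have := Finset.mem_filter.mp hmxS
          exact ⟨this.1, this.2⟩
        have hg0 : coeff mg g ≠ 0 := MvPolynomial.mem_support_iff.mp hlmg.1
        set c : ℂ := coeff mx q / coeff mg g with hc
        set q' : MvPolynomial (Fin n) ℂ := q - monomial (mx - mg) c * g with hq'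
        have hfq' : f q' = f q := by
          rw [hq', map_sub, map_mul, hBk g hgB, mul_zero, sub_zero]
        have hcoeffmx : coeff mx q' = 0 := by
          rw [hq', coeff_sub, coeff_monomial_mul', if_pos (tsub_le_self)]
          rw [tsub_tsub_cancel_of_le hmgle, hc, div_mul_cancel₀ _ hg0, sub_self]
        have hmxnot : mx ∉ q'.support := by
          simp [MvPolynomial.mem_support_iff, hcoeffmx]
        have hlt : ∀ m'' ∈ q'.support, Red m'' → emb m'' < emb mx := by
          intro m'' hm'' hred''
          have hm''ne : m'' ≠ mx := fun h => hmxnot (h ▸ hm'')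
          have hsub : m'' ∈ q.support ∪ (monomial (mx - mg) c * g).support := by
            have := MvPolynomial.support_sub (Fin n) q (monomial (mx - mg) c * g)
            exact this (by rw [← hq']; exact hm'')
          rcases Finset.mem_union.mp hsub with h1 | h1
          · have : emb m'' ≤ emb mx := hmax m'' (Finset.mem_filter.mpr ⟨h1, hred''⟩)
            exact lt_of_le_of_ne this (fun h => hm''ne (emb_injective h))
          · have hcne : coeff m'' (monomial (mx - mg) c * g) ≠ 0 :=
              MvPolynomial.mem_support_iff.mp h1
            rw [coeff_monomial_mul'] at hcne
            by_cases hle : mx - mg ≤ m''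
            · rw [if_pos hle] at hcne
              have hg' : coeff (m'' - (mx - mg)) g ≠ 0 := by
                intro h; rw [h, mul_zero] at hcne; exact hcne rfl
              set m' := m'' - (mx - mg) with hm'
              have hm'g : m' ∈ g.support := MvPolynomial.mem_support_iff.mpr hg'
              have hdecomp : (mx - mg) + m' = m'' := by
                rw [hm']; exact add_tsub_cancel_of_le hle
              have hm'ne : m' ≠ mg := by
                intro h
                apply hm''ne
                rw [← hdecomp, h, tsub_add_cancel_of_le hmgle]
              have hlex : emb m' < emb mg := by
                have := (lexLe_iff_emb m' mg).mp (hlmg.2 m' hm'g)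
                exact lt_of_le_of_ne this (fun h => hm'ne (emb_injective h))
              calc emb m'' = emb (mx - mg) + emb m' := by rw [← hdecomp, emb_add]
                _ < emb (mx - mg) + emb mg := by exact add_lt_add_right hlex _
                _ = emb ((mx - mg) + mg) := (emb_add _ _).symm
                _ = emb mx := by rw [tsub_add_cancel_of_le hmgle]
            · rw [if_neg hle] at hcne; exact absurd rfl hcne
        have hmxlev : emb mx ≤ v := hq mx hmxq ⟨g, hgB, mg, hlmg, hmgle⟩
        by_cases h2 : ∃ m₂ ∈ q'.support, Red m₂
        · obtain ⟨m₂, hm₂q, hm₂r⟩ := h2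
          have hne2 : (q'.support.filter Red).Nonempty :=
            ⟨m₂, Finset.mem_filter.mpr ⟨hm₂q, hm₂r⟩⟩
          obtain ⟨mm, hmmS, hmm⟩ := Finset.exists_max_image (q'.support.filter Red) emb hne2
          have hmmlt : emb mm < emb mx := by
            have := Finset.mem_filter.mp hmmS
            exact hlt mm this.1 this.2
          obtain ⟨r, hr1, hr2⟩ := IH (emb mm) (lt_of_lt_of_le hmmlt hmxlev) q'
            (fun m' hm' hr' => hmm m' (Finset.mem_filter.mpr ⟨hm', hr'⟩))
          exact ⟨r, hr1.trans hfq', hr2⟩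
        · refine ⟨q', hfq', ?_⟩
          intro mm hmm g' hg' mg' hlm' hle'
          exact h2 ⟨mm, hmm, g', hg', mg', hlm', hle'⟩
      · refine ⟨q, rfl, ?_⟩
        intro mm hmm g' hg' mg' hlm' hle'
        exact hred ⟨mm, hmm, g', hg', mg', hlm', hle'⟩
  by_cases hred : ∃ m₀ ∈ q.support, Red m₀
  · obtain ⟨m₀, hm₀q, hm₀r⟩ := hred
    have hne : (q.support.filter Red).Nonempty :=
      ⟨m₀, Finset.mem_filter.mpr ⟨hm₀q, hm₀r⟩⟩
    obtain ⟨mx, _, hmax⟩ := Finset.exists_max_image (q.support.filter Red) emb hne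
    exact aux (emb mx) q (fun m' hm' hr' => hmax m' (Finset.mem_filter.mpr ⟨hm', hr'⟩))
  · refine ⟨q, rfl, ?_⟩
    intro mm hmm g' hg' mg' hlm' hle'
    exact hred ⟨mm, hmm, g', hg', mg', hlm', hle'⟩

/-- Lemma 3.13: let `f : F → A` be an algebra map with kernel `I`, `F'` the
subring in the first `s` variables with `F' ∩ I = {0}`, `B` a Gröbner basis of `I` for the
lexicographic order with `x_1 < ⋯ < x_n`, `A'' = f(F')`, and `A'''` a subalgebra with
`A'' ⊆ A''' ⊆ A' = f(F)`.  If for every `ω ∈ A'''` of positive degree (i.e. not a scalar) the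
normal form of any preimage of `ω` contains a monomial lying in `F'` (with nonzero coefficient),
then `A''' = A''`. -/
theorem stmt1 {n m : ℕ} (s : ℕ) (hs : s < n)
    (f : MvPolynomial (Fin n) ℂ →ₐ[ℂ] MvPolynomial (Fin m) ℂ)
    (B : Finset (MvPolynomial (Fin n) ℂ))
    (hB : IsGroebner (RingHom.ker (f : MvPolynomial (Fin n) ℂ →+* MvPolynomial (Fin m) ℂ)) B)
    (hint : ∀ p : MvPolynomial (Fin n) ℂ, OnlySmall s p → f p = 0 → p = 0)
    (A''' : Subalgebra ℂ (MvPolynomial (Fin m) ℂ))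
    (hlow : ∀ p : MvPolynomial (Fin n) ℂ, OnlySmall s p → f p ∈ A''')
    (hup : (A''' : Set (MvPolynomial (Fin m) ℂ)) ⊆ Set.range f)
    (hnf : ∀ ω ∈ A''', ω ∉ Set.range (algebraMap ℂ (MvPolynomial (Fin m) ℂ)) →
      ∀ r : MvPolynomial (Fin n) ℂ, IsNormalForm B r → f r = ω →
        ∃ mon ∈ r.support, ∀ j : Fin n, s ≤ (j : ℕ) → mon j = 0) :
    ∀ ω ∈ A''', ∃ p : MvPolynomial (Fin n) ℂ, OnlySmall s p ∧ f p = ω := by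
  classical
  set Sm : (Fin n →₀ ℕ) → Prop := fun mm => ∀ j : Fin n, s ≤ (j : ℕ) → mm j = 0 with hSm
  have hBk : ∀ g ∈ B, f g = 0 := fun g hg => (hB.1 g hg).1
  have key : ∀ k : ℕ, ∀ r : MvPolynomial (Fin n) ℂ, r.support.card ≤ k →
      IsNormalForm B r → f r ∈ A''' → ∃ p, OnlySmall s p ∧ f p = f r := by
    intro k
    induction k with
    | zero =>
      intro r hcard _ _
      have : r.support = ∅ := Finset.card_eq_zero.mp (Nat.le_zero.mp hcard)
      have hr0 : r = 0 := MvPolynomial.support_eq_empty.mp this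
      exact ⟨0, fun mm hmm j hj => absurd hmm (by simp), by rw [hr0]⟩
    | succ k IH =>
      intro r hcard hnfr hrA
      by_cases hsc : f r ∈ Set.range (algebraMap ℂ (MvPolynomial (Fin m) ℂ))
      · obtain ⟨c, hc⟩ := hsc
        refine ⟨MvPolynomial.C c, ?_, ?_⟩
        · intro mm hmm j hj
          have := MvPolynomial.mem_support_iff.mp hmm
          rw [MvPolynomial.coeff_C] at this
          have : mm = 0 := by by_contra h; exact this (if_neg (fun h' => h h'.symm))
          simp [this]
        · rw [← hc, ← MvPolynomial.algebraMap_eq, AlgHom.commutes]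
      · obtain ⟨mon, hmonr, hmons⟩ := hnf (f r) hrA hsc r hnfr rfl
        set a : MvPolynomial (Fin n) ℂ :=
          ∑ m' ∈ r.support.filter Sm, monomial m' (coeff m' r) with ha
        set b : MvPolynomial (Fin n) ℂ :=
          ∑ m' ∈ r.support.filter (fun x => ¬ Sm x), monomial m' (coeff m' r) with hb
        have hab : a + b = r := by
          rw [ha, hb, Finset.sum_filter_add_sum_filter_not]
          exact MvPolynomial.support_sum_monomial_coeff r
        have hasup : a.support ⊆ r.support.filter Sm := by
          refine (MvPolynomial.support_sum).trans ?_
          intro x hx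
          obtain ⟨y, hy, hxy⟩ := Finset.mem_biUnion.mp hx
          have := MvPolynomial.support_monomial_subset hxy
          rwa [Finset.mem_singleton.mp this]
        have hbsup : b.support ⊆ r.support.filter (fun x => ¬ Sm x) := by
          refine (MvPolynomial.support_sum).trans ?_
          intro x hx
          obtain ⟨y, hy, hxy⟩ := Finset.mem_biUnion.mp hx
          have := MvPolynomial.support_monomial_subset hxy
          rwa [Finset.mem_singleton.mp this]
        have haSm : OnlySmall s a := by
          intro mm hmm j hj
          exact (Finset.mem_filter.mp (hasup hmm)).2 j hj
        have hfa : f a ∈ A''' := hlow a haSm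
        have hfb : f b ∈ A''' := by
          have : f b = f r - f a := by rw [← hab, map_add]; ring
          rw [this]
          exact Subalgebra.sub_mem _ hrA hfa
        have hbnf : IsNormalForm B b := by
          intro mm hmm g hg mg hlm
          exact hnfr mm ((hbsup.trans (Finset.filter_subset _ _)) hmm) g hg mg hlm
        have hmonfil : mon ∈ r.support.filter Sm := Finset.mem_filter.mpr ⟨hmonr, hmons⟩
        have hbcard : b.support.card ≤ k := by
          have h1 : b.support.card ≤ (r.support.filter (fun x => ¬ Sm x)).card :=
            Finset.card_le_card hbsup
          have h2 : (r.support.filter Sm).card + (r.support.filter (fun x => ¬ Sm x)).card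
              = r.support.card := Finset.card_filter_add_card_filter_not _
          have h3 : 1 ≤ (r.support.filter Sm).card :=
            Finset.card_pos.mpr ⟨mon, hmonfil⟩
          omega
        obtain ⟨p', hp'1, hp'2⟩ := IH b hbcard hbnf hfb
        refine ⟨a + p', ?_, ?_⟩
        · intro mm hmm j hj
          rcases Finset.mem_union.mp (MvPolynomial.support_add hmm) with h | h
          · exact haSm mm h j hj
          · exact hp'1 mm h j hj
        · rw [map_add, hp'2, ← map_add, hab]
  intro ω hω
  obtain ⟨q, hq⟩ := hup hω
  obtain ⟨r, hr1, hr2⟩ := nf_exists f B hBk q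
  have hfr : f r = ω := hr1.trans hq
  obtain ⟨p, hp1, hp2⟩ := key r.support.card r le_rfl hr2 (hfr ▸ hω)
  exact ⟨p, hp1, hp2.trans hfr⟩
end

section
/- Let P be the polynomial ring over C in variables β^x_k, β^y_k, β^h_k, γ^{x'}_k, γ^{y'}_k, γ^{h'}_k for k ≥ 0. Define τ^x_0 = 2 β^x_0 γ^{h'}_0 - β^h_0 γ^{y'}_0, τ^y_0 = -2 β^y_0 γ^{h'}_0 + β^h_0 γ^{x'}_0, τ^h_0 = -2 β^x_0 γ^{x'}_0 + 2 β^y_0 γ^{y'}_0, and let ∂ be the derivation of P with ∂(β^u_k) = β^u_{k+1} (suitably normalized, ∂ of each generator of level k is the generator of level k+1 up to the natural scalar), and set τ^u_k = ∂^k τ^u_0 for u ∈ {x,y,h}. Then the polynomials {τ^u_k : u ∈ {x,y,h}, k ≥ 0} are algebraically independent over C. -/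
open MvPolynomial

/-- Generators of the ring `P`: `((u, true), k)` is `β^u_k` and `((u, false), k)` is `γ^{u'}_k`,
where `u : Fin 3` encodes `x, y, h` as `0, 1, 2`. -/
abbrev PGen : Type := (Fin 3 × Bool) × ℕ

/-- The polynomial ring `P = C[β^u_k, γ^{u'}_k]`. -/
abbrev Pring : Type := MvPolynomial PGen ℂ

noncomputable def Beta (u : Fin 3) (k : ℕ) : Pring := X ((u, true), k)
noncomputable def Gam (u : Fin 3) (k : ℕ) : Pring := X ((u, false), k)

/-- The derivation `∂` with `∂(β^u_k) = (k+1) β^u_{k+1}` and `∂(γ^{u'}_k) = (k+1) γ^{u'}_{k+1}`. -/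
noncomputable def Del : Derivation ℂ Pring Pring :=
  mkDerivation ℂ (fun g => ((g.2 + 1 : ℕ) : ℂ) • (X (g.1, g.2 + 1) : Pring))

/-- `τ^x_0 = 2 β^x_0 γ^{h'}_0 - β^h_0 γ^{y'}_0`, `τ^y_0 = -2 β^y_0 γ^{h'}_0 + β^h_0 γ^{x'}_0`,
`τ^h_0 = -2 β^x_0 γ^{x'}_0 + 2 β^y_0 γ^{y'}_0`. -/
noncomputable def tau0 : Fin 3 → Pring :=
  ![2 * Beta 0 0 * Gam 2 0 - Beta 2 0 * Gam 1 0,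
    -2 * Beta 1 0 * Gam 2 0 + Beta 2 0 * Gam 0 0,
    -2 * Beta 0 0 * Gam 0 0 + 2 * Beta 1 0 * Gam 1 0]

/-- `τ^u_k = ∂^k τ^u_0`. -/
noncomputable def tau (u : Fin 3) (k : ℕ) : Pring := (fun p => Del p)^[k] (tau0 u)

namespace Stmt4Aux

variable {σ : Type*} {τ : Type*}

/-! ### Minimal-degree filtration machinery -/

/-- All monomials of `p` have degree at least `n`. -/
def MDeg (n : ℕ) (p : MvPolynomial τ ℂ) : Prop :=
  ∀ d ∈ p.support, n ≤ d.degree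

lemma deg_add (a b : τ →₀ ℕ) : (a + b).degree = a.degree + b.degree := by
  simp only [Finsupp.degree_eq_weight_one, map_add]

lemma deg_single (i : τ) (b : ℕ) : (Finsupp.single i b).degree = b := by
  rcases eq_or_ne b 0 with rfl | hb
  · simp [Finsupp.degree]
  · exact Finsupp.degree_single i b

lemma mdeg_mono {m n : ℕ} (h : m ≤ n) {p : MvPolynomial τ ℂ} (hp : MDeg n p) : MDeg m p :=
  fun d hd => le_trans h (hp d hd)

lemma mdeg_zero (n : ℕ) : MDeg n (0 : MvPolynomial τ ℂ) := by
  intro d hd; simp at hd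

lemma mdeg_add {n : ℕ} {p q : MvPolynomial τ ℂ} (hp : MDeg n p) (hq : MDeg n q) :
    MDeg n (p + q) := by
  classical
  intro d hd
  rcases Finset.mem_union.mp (MvPolynomial.support_add hd) with h | h
  · exact hp d h
  · exact hq d h

lemma mdeg_smul {n : ℕ} (c : ℂ) {p : MvPolynomial τ ℂ} (hp : MDeg n p) : MDeg n (c • p) :=
  fun d hd => hp d (MvPolynomial.support_smul hd)

lemma mdeg_sum {n : ℕ} {ι : Type*} (s : Finset ι) (f : ι → MvPolynomial τ ℂ)
    (h : ∀ i ∈ s, MDeg n (f i)) : MDeg n (∑ i ∈ s, f i) := by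
  classical
  induction s using Finset.induction_on with
  | empty => simpa using mdeg_zero n
  | insert _ _ hi ih =>
      rw [Finset.sum_insert hi]
      exact mdeg_add (h _ (Finset.mem_insert_self _ _))
        (ih fun i hisa => h i (Finset.mem_insert_of_mem hisa))

lemma mdeg_mul {m n : ℕ} {p q : MvPolynomial τ ℂ} (hp : MDeg m p) (hq : MDeg n q) :
    MDeg (m + n) (p * q) := by
  classical
  intro d hd
  obtain ⟨d1, hd1, d2, hd2, rfl⟩ := Finset.mem_add.mp (MvPolynomial.support_mul p q hd)
  rw [deg_add]
  exact add_le_add (hp d1 hd1) (hq d2 hd2)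

lemma mdeg_monomial {n : ℕ} {d : τ →₀ ℕ} (a : ℂ) (h : n ≤ d.degree) :
    MDeg n (monomial d a) := by
  intro d' hd'
  rw [MvPolynomial.support_monomial] at hd'
  split_ifs at hd' with h0
  · simp at hd'
  · rw [Finset.mem_singleton] at hd'; subst hd'; exact h

lemma mdeg_X (j : τ) : MDeg 1 (X j : MvPolynomial τ ℂ) := by
  rw [MvPolynomial.X]
  exact mdeg_monomial 1 (by rw [deg_single])

lemma mdeg_of_homog {n : ℕ} {p : MvPolynomial τ ℂ} (h : p.IsHomogeneous n) : MDeg n p := by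
  intro d hd
  rw [MvPolynomial.mem_support_iff] at hd
  rw [Finsupp.degree_eq_weight_one]
  exact le_of_eq (h hd).symm

lemma homComp_eq_zero_of_mdeg {m n : ℕ} {p : MvPolynomial τ ℂ} (hp : MDeg n p) (h : m < n) :
    homogeneousComponent m p = 0 := by
  ext d
  rw [coeff_homogeneousComponent, coeff_zero]
  split_ifs with hd
  · by_contra hc
    have := hp d (MvPolynomial.mem_support_iff.mpr hc)
    omega
  · rfl

/-! ### The main algebraic-independence criterion -/

section Main

variable (ι : σ → τ) (lam : σ → ℂ) (Q : σ → MvPolynomial τ ℂ)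

/-- The "scaled rename" algebra map. -/
noncomputable def scaleMap : MvPolynomial σ ℂ →ₐ[ℂ] MvPolynomial τ ℂ :=
  aeval (fun i => lam i • X (ι i))

lemma scaleMap_injective (hι : Function.Injective ι) (hlam : ∀ i, lam i ≠ 0) :
    Function.Injective (scaleMap ι lam) := by
  classical
  let ψ : MvPolynomial τ ℂ →ₐ[ℂ] MvPolynomial σ ℂ :=
    aeval (fun j => if h : ∃ i, ι i = j then (lam h.choose)⁻¹ • X h.choose else 0)
  have hcomp : ∀ i : σ, ψ (lam i • X (ι i)) = X i := by
    intro i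
    have h : ∃ i', ι i' = ι i := ⟨i, rfl⟩
    have hch : h.choose = i := hι h.choose_spec
    rw [map_smul, show ψ (X (ι i)) = _ from aeval_X _ _, dif_pos h, hch, smul_smul,
      mul_inv_cancel₀ (hlam i), one_smul]
  have hid : ψ.comp (scaleMap ι lam) = AlgHom.id ℂ _ := by
    apply MvPolynomial.algHom_ext
    intro i
    simp only [AlgHom.coe_comp, Function.comp_apply, AlgHom.coe_id, id_eq, scaleMap, aeval_X]
    exact hcomp i
  intro a b hab
  have := congrArg ψ hab
  rwa [show ψ ((scaleMap ι lam) a) = a from AlgHom.congr_fun hid a,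
    show ψ ((scaleMap ι lam) b) = b from AlgHom.congr_fun hid b] at this

lemma scaleMap_monomial_homog (s : σ →₀ ℕ) (a : ℂ) :
    ((scaleMap ι lam) (monomial s a)).IsHomogeneous s.degree := by
  rw [monomial_eq, map_mul, show (scaleMap ι lam) (C a) = C a from algHom_C _ _]
  apply MvPolynomial.IsHomogeneous.C_mul
  rw [Finsupp.prod, map_prod]
  have : s.degree = ∑ i ∈ s.support, s i := rfl
  rw [this]
  apply MvPolynomial.IsHomogeneous.prod
  intro i _
  rw [map_pow, show (scaleMap ι lam) (X i) = lam i • X (ι i) from aeval_X _ _, smul_pow]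
  rw [MvPolynomial.smul_eq_C_mul]
  exact (isHomogeneous_X_pow _ _).C_mul _

variable {ι lam Q}

lemma pow_expand (hQ : ∀ i, MDeg 2 (Q i)) (i : σ) :
    ∀ b : ℕ, ∃ r, (lam i • X (ι i) + Q i) ^ b = (lam i • X (ι i)) ^ b + r ∧ MDeg (b + 1) r := by
  have hA : MDeg 1 (lam i • X (ι i)) := mdeg_smul _ (mdeg_X _)
  have hApow : ∀ b : ℕ, MDeg b ((lam i • X (ι i)) ^ b) := by
    intro b
    rw [smul_pow, X_pow_eq_monomial]
    exact mdeg_smul _ (mdeg_monomial _ (by rw [deg_single]))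
  intro b
  induction b with
  | zero => exact ⟨0, by simp, mdeg_zero _⟩
  | succ b ih =>
      obtain ⟨r, hr, hrd⟩ := ih
      refine ⟨(lam i • X (ι i)) ^ b * Q i + (lam i • X (ι i) + Q i) * r, ?_, ?_⟩
      · rw [pow_succ, hr]; ring
      · apply mdeg_add
        · have := mdeg_mul (hApow b) (hQ i)
          exact this
        · have h1 : MDeg 1 (lam i • X (ι i) + Q i) :=
            mdeg_add hA (mdeg_mono (by omega) (hQ i))
          have := mdeg_mul h1 hrd
          rwa [show 1 + (b + 1) = b + 1 + 1 from by omega] at this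

lemma monomial_expand (hQ : ∀ i, MDeg 2 (Q i)) (s : σ →₀ ℕ) :
    ∃ r, (aeval (fun i => lam i • X (ι i) + Q i)) (monomial s (1:ℂ))
        = (scaleMap ι lam) (monomial s (1:ℂ)) + r ∧ MDeg (s.degree + 1) r := by
  classical
  induction s using Finsupp.induction with
  | zero =>
      refine ⟨0, ?_, mdeg_zero _⟩
      simp only [monomial_zero', C_1, map_one, add_zero]
  | single_add i b s' hi hb ih =>
      obtain ⟨r', hr', hrd'⟩ := ih
      obtain ⟨rb, hrb, hrbd⟩ := pow_expand hQ i b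
      have hdeg : (Finsupp.single i b + s').degree = b + s'.degree := by
        rw [deg_add, deg_single]
      have hApow : MDeg b ((lam i • X (ι i)) ^ b) := by
        rw [smul_pow, X_pow_eq_monomial]
        exact mdeg_smul _ (mdeg_monomial _ (by rw [deg_single]))
      have hsc' : MDeg s'.degree ((scaleMap ι lam) (monomial s' (1:ℂ))) :=
        mdeg_of_homog (scaleMap_monomial_homog ι lam s' 1)
      refine ⟨(lam i • X (ι i)) ^ b * r' + rb * (scaleMap ι lam) (monomial s' (1:ℂ)) + rb * r',
        ?_, ?_⟩
      · rw [monomial_single_add, map_mul, map_pow, map_mul, map_pow,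
          show (aeval fun i => lam i • X (ι i) + Q i) (X i) = _ from aeval_X _ _,
          show (scaleMap ι lam) (X i) = lam i • X (ι i) from aeval_X _ _, hrb, hr']
        ring
      · rw [hdeg]
        apply mdeg_add
        · apply mdeg_add
          · have := mdeg_mul hApow hrd'
            rwa [show b + (s'.degree + 1) = b + s'.degree + 1 from by omega] at this
          · have := mdeg_mul hrbd hsc'
            rwa [show b + 1 + s'.degree = b + s'.degree + 1 from by omega] at this
        · have := mdeg_mul hrbd hrd'
          exact mdeg_mono (by omega) this

/-- Main criterion: a family of the form `λᵢ • Xᵢ + (degree ≥ 2)` with injective variable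
assignment and nonzero scalars is algebraically independent. -/
theorem main_indep (hι : Function.Injective ι) (hlam : ∀ i, lam i ≠ 0)
    (hQ : ∀ i, MDeg 2 (Q i)) :
    AlgebraicIndependent ℂ (fun i => lam i • X (ι i) + Q i) := by
  classical
  rw [algebraicIndependent_iff_injective_aeval]
  rw [injective_iff_map_eq_zero]
  intro p hp
  by_contra hp0
  have hp' : (aeval fun i => lam i • X (ι i) + Q i) p = (0 : MvPolynomial τ ℂ) := hp
  have hsupp : p.support.Nonempty := by
    rw [Finset.nonempty_iff_ne_empty]
    intro h
    exact hp0 (MvPolynomial.support_eq_empty.mp h)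
  set n := (p.support.image Finsupp.degree).min' (hsupp.image _) with hn
  have hmemn : n ∈ p.support.image Finsupp.degree := Finset.min'_mem _ _
  obtain ⟨s0, hs0, hs0deg⟩ := Finset.mem_image.mp hmemn
  have hminle : ∀ s ∈ p.support, n ≤ s.degree := fun s hs =>
    Finset.min'_le _ _ (Finset.mem_image_of_mem _ hs)
  -- compute the degree-n homogeneous component of the image
  have key : homogeneousComponent n ((aeval fun i => lam i • X (ι i) + Q i) p)
      = (scaleMap ι lam) (homogeneousComponent n p) := by
    conv_lhs => rw [p.as_sum]
    rw [map_sum, map_sum]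
    have hterm : ∀ s ∈ p.support,
        homogeneousComponent n ((aeval fun i => lam i • X (ι i) + Q i) (monomial s (coeff s p)))
        = if n = s.degree then (scaleMap ι lam) (monomial s (coeff s p)) else 0 := by
      intro s hs
      obtain ⟨r, hr, hrd⟩ := monomial_expand (ι := ι) (lam := lam) hQ s
      have hCm : (monomial s (coeff s p)) = C (coeff s p) * monomial s 1 := by
        rw [C_mul_monomial, mul_one]
      have hr2 : (aeval fun i => lam i • X (ι i) + Q i) ((monomial s) (1:ℂ))
          = (scaleMap ι lam) ((monomial s) (1:ℂ)) + r := hr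
      have hav : (aeval fun i => lam i • X (ι i) + Q i) (monomial s (coeff s p))
          = C (coeff s p) * ((scaleMap ι lam) (monomial s 1) + r) := by
        rw [hCm, map_mul, hr2, algHom_C, MvPolynomial.algebraMap_eq]
      rw [hav, mul_add, map_add, homogeneousComponent_C_mul, homogeneousComponent_C_mul,
        homogeneousComponent_of_mem (scaleMap_monomial_homog ι lam s 1),
        homComp_eq_zero_of_mdeg hrd (by have := hminle s hs; omega), mul_zero, add_zero,
        hCm, map_mul, algHom_C, MvPolynomial.algebraMap_eq]
      split_ifs with h
      · rfl
      · rw [mul_zero]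
    rw [Finset.sum_congr rfl hterm]
    rw [homogeneousComponent_apply]
    rw [map_sum]
    rw [Finset.sum_filter]
    apply Finset.sum_congr rfl
    intro s hs
    by_cases h : s.degree = n
    · rw [if_pos h.symm, if_pos h]
    · rw [if_neg (fun hh => h hh.symm), if_neg h]
  have hcompn : homogeneousComponent n p ≠ 0 := by
    intro h
    have hco : coeff s0 (homogeneousComponent n p) = coeff s0 p := by
      rw [coeff_homogeneousComponent, if_pos hs0deg]
    rw [h, coeff_zero] at hco
    exact MvPolynomial.mem_support_iff.mp hs0 hco.symm
  rw [hp', map_zero] at key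
  have : homogeneousComponent n p = 0 := by
    apply scaleMap_injective ι lam hι hlam
    rw [map_zero, ← key]
  exact hcompn this

/-- Adding constants preserves algebraic independence. -/
theorem shift_indep (v : σ → MvPolynomial τ ℂ) (e : σ → ℂ)
    (hv : AlgebraicIndependent ℂ v) :
    AlgebraicIndependent ℂ (fun i => v i + C (e i)) := by
  classical
  rw [algebraicIndependent_iff_injective_aeval] at hv ⊢
  set T : MvPolynomial σ ℂ →ₐ[ℂ] MvPolynomial σ ℂ :=
    aeval (fun i => (X i : MvPolynomial σ ℂ) + C (e i)) with hT
  set T' : MvPolynomial σ ℂ →ₐ[ℂ] MvPolynomial σ ℂ :=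
    aeval (fun i => (X i : MvPolynomial σ ℂ) - C (e i)) with hT'
  have hTT : T'.comp T = AlgHom.id ℂ _ := by
    apply MvPolynomial.algHom_ext
    intro i
    simp [hT, hT', map_add, aeval_X]
  have hcomp : (aeval (fun i => v i + C (e i)) : MvPolynomial σ ℂ →ₐ[ℂ] MvPolynomial τ ℂ)
      = (aeval v).comp T := by
    apply MvPolynomial.algHom_ext
    intro i
    simp [hT, map_add, aeval_X]
  intro a b hab
  have hab' : (aeval (fun i => v i + C (e i))) a = (aeval (fun i => v i + C (e i))) b := hab
  rw [show (aeval (fun i => v i + C (e i))) a = (aeval v) (T a) from AlgHom.congr_fun hcomp a,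
    show (aeval (fun i => v i + C (e i))) b = (aeval v) (T b) from AlgHom.congr_fun hcomp b]
    at hab'
  have h2 : T a = T b := hv hab'
  have := congrArg T' h2
  rwa [show T' (T a) = a from AlgHom.congr_fun hTT a,
    show T' (T b) = b from AlgHom.congr_fun hTT b] at this

end Main

/-! ### The substitution `φ` and basic properties of `Del` -/

/-- Images of the generators: `β^x ↦ 1`, `β^y ↦ 0`, `β^h ↦ itself`,
`γ^{x'} ↦ 1 + X`, `γ^{y'} ↦ 0`, `γ^{h'} ↦ itself`. -/
noncomputable def gsub (g : PGen) : Pring :=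
  if g.1.1 = 2 then X g
  else if g.1.1 = 1 then 0
  else if g.1.2 = true then (if g.2 = 0 then 1 else 0)
  else (if g.2 = 0 then 1 else 0) + X g

noncomputable def phi : Pring →ₐ[ℂ] Pring := aeval gsub

lemma del_X (g : Fin 3 × Bool) (k : ℕ) :
    Del (X (g, k)) = ((k + 1 : ℕ) : ℂ) • X (g, k + 1) := by
  rw [show Del = mkDerivation ℂ (fun g : PGen => ((g.2 + 1 : ℕ) : ℂ) • (X (g.1, g.2 + 1) : Pring))
    from rfl, mkDerivation_X]

lemma del_C (c : ℂ) : Del (C c : Pring) = 0 := by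
  rw [show (C c : Pring) = algebraMap ℂ Pring c from rfl, Derivation.map_algebraMap]

lemma iter_del_add (k : ℕ) (p q : Pring) :
    Del^[k] (p + q) = Del^[k] p + Del^[k] q := by
  induction k generalizing p q with
  | zero => rfl
  | succ k ih => rw [Function.iterate_succ_apply, Function.iterate_succ_apply,
      Function.iterate_succ_apply, map_add, ih]

lemma iter_del_smul (k : ℕ) (c : ℂ) (p : Pring) :
    Del^[k] (c • p) = c • Del^[k] p := by
  induction k generalizing p with
  | zero => rfl
  | succ k ih => rw [Function.iterate_succ_apply, Function.iterate_succ_apply, Del.map_smul, ih]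

lemma iter_del_one (k : ℕ) : Del^[k] (1 : Pring) = if k = 0 then 1 else 0 := by
  cases k with
  | zero => rfl
  | succ k =>
      rw [Function.iterate_succ_apply, Derivation.map_one_eq_zero, if_neg (Nat.succ_ne_zero k)]
      exact Function.iterate_fixed (map_zero _) _

lemma iter_del_C (k : ℕ) (c : ℂ) :
    Del^[k] (C c : Pring) = if k = 0 then C c else 0 := by
  cases k with
  | zero => rfl
  | succ k =>
      rw [Function.iterate_succ_apply, del_C, if_neg (Nat.succ_ne_zero k)]
      exact Function.iterate_fixed (map_zero _) _

/-- Falling-type coefficients: `FF m k = (m+1)(m+2)⋯(m+k)` as a complex number. -/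
noncomputable def FF (m k : ℕ) : ℂ := ∏ j ∈ Finset.range k, ((m + j + 1 : ℕ) : ℂ)

lemma FF_ne (m k : ℕ) : FF m k ≠ 0 := by
  rw [FF]
  apply Finset.prod_ne_zero_iff.mpr
  intro j _
  exact Nat.cast_ne_zero.mpr (by omega)

lemma FF_succ (m k : ℕ) : FF m (k + 1) = ((m + 1 : ℕ) : ℂ) * FF (m + 1) k := by
  rw [FF, Finset.prod_range_succ', mul_comm, FF]
  have h : ∀ j ∈ Finset.range k, ((m + (j + 1) + 1 : ℕ) : ℂ) = ((m + 1 + j + 1 : ℕ) : ℂ) := by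
    intro j _
    congr 1
    omega
  rw [Finset.prod_congr rfl h]

lemma iter_del_X (g : Fin 3 × Bool) :
    ∀ k m : ℕ, Del^[k] (X (g, m) : Pring) = FF m k • X (g, m + k) := by
  intro k
  induction k with
  | zero => intro m; simp [FF]
  | succ k ih =>
      intro m
      rw [Function.iterate_succ_apply, del_X, iter_del_smul, ih, smul_smul, ← FF_succ,
        show m + 1 + k = m + (k + 1) from by omega]

/-! ### `Del` does not decrease the minimal degree -/

lemma degsub {i : PGen} {s : PGen →₀ ℕ} (hi : i ∈ s.support) :
    (s - Finsupp.single i 1).degree + 1 = s.degree := by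
  classical
  have h : (s - Finsupp.single i 1) + Finsupp.single i 1 = s := by
    ext j
    have hs : s i ≠ 0 := Finsupp.mem_support_iff.mp hi
    rcases eq_or_ne j i with rfl | hj
    · simp only [Finsupp.add_apply, Finsupp.tsub_apply, Finsupp.single_eq_same]
      omega
    · simp only [Finsupp.add_apply, Finsupp.tsub_apply,
        Finsupp.single_eq_of_ne' (fun h => hj h.symm)]
      omega
  conv_rhs => rw [← h]
  rw [deg_add, deg_single]

lemma del_mdeg {n : ℕ} {p : Pring} (hp : MDeg n p) : MDeg n (Del p) := by
  classical
  have hrep : Del p = ∑ s ∈ p.support, Del (monomial s (coeff s p)) := by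
    conv_lhs => rw [p.as_sum]
    exact map_sum Del.toLinearMap _ _
  rw [hrep]
  apply mdeg_sum
  intro s hs
  have hns : n ≤ s.degree := hp s hs
  rw [show (Del (monomial s (coeff s p)) : Pring)
      = mkDerivation ℂ (fun g : PGen => ((g.2 + 1 : ℕ) : ℂ) • (X (g.1, g.2 + 1) : Pring))
        (monomial s (coeff s p)) from rfl,
    mkDerivation_monomial]
  apply mdeg_smul
  rw [Finsupp.sum]
  apply mdeg_sum
  intro i hi
  have hterm : (monomial (s - Finsupp.single i 1) ((s i : ℕ) : ℂ) : Pring)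
      • (((i.2 + 1 : ℕ) : ℂ) • (X (i.1, i.2 + 1) : Pring))
      = ((i.2 + 1 : ℕ) : ℂ) •
        (monomial ((s - Finsupp.single i 1) + Finsupp.single (i.1, i.2 + 1) 1)
          ((s i : ℕ) : ℂ) : Pring) := by
    rw [smul_eq_mul, mul_smul_comm, show (X (i.1, i.2 + 1) : Pring)
      = monomial (Finsupp.single (i.1, i.2 + 1) 1) 1 from rfl, monomial_mul, mul_one]
  rw [hterm]
  apply mdeg_smul
  apply mdeg_monomial
  rw [deg_add, deg_single, degsub hi]
  exact hns

/-! ### `φ` commutes with `Del` -/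

lemma gsub_bh {g : Fin 3 × Bool} (k : ℕ) (h : g.1 = 2) : gsub (g, k) = X (g, k) := by
  obtain ⟨u, b⟩ := g
  simp only at h
  subst h
  simp [gsub]

lemma gsub_by {g : Fin 3 × Bool} (k : ℕ) (h : g.1 = 1) : gsub (g, k) = 0 := by
  obtain ⟨u, b⟩ := g
  simp only at h
  subst h
  simp [gsub]

lemma gsub_bx {g : Fin 3 × Bool} (k : ℕ) (h1 : g.1 = 0) (h2 : g.2 = true) :
    gsub (g, k) = (if k = 0 then 1 else 0) := by
  obtain ⟨u, b⟩ := g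
  simp only at h1 h2
  subst h1; subst h2
  simp [gsub]

lemma gsub_gx {g : Fin 3 × Bool} (k : ℕ) (h1 : g.1 = 0) (h2 : g.2 = false) :
    gsub (g, k) = (if k = 0 then 1 else 0) + X (g, k) := by
  obtain ⟨u, b⟩ := g
  simp only at h1 h2
  subst h1; subst h2
  simp [gsub]

lemma del_ite_one (k : ℕ) : Del (if k = 0 then (1 : Pring) else 0) = 0 := by
  split_ifs
  · exact Derivation.map_one_eq_zero Del
  · exact map_zero Del

lemma phi_del_X (i : PGen) : phi (Del (X i)) = Del (phi (X i)) := by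
  obtain ⟨g, k⟩ := i
  rw [del_X, map_smul, show phi (X (g, k + 1)) = gsub (g, k + 1) from aeval_X _ _,
    show phi (X (g, k)) = gsub (g, k) from aeval_X _ _]
  by_cases h2 : g.1 = 2
  · rw [gsub_bh _ h2, gsub_bh _ h2, del_X]
  by_cases h1 : g.1 = 1
  · rw [gsub_by _ h1, gsub_by _ h1, smul_zero, map_zero]
  have h0 : g.1 = 0 := by
    have hlt := g.1.isLt
    have hv2 : (g.1 : ℕ) ≠ 2 := fun h => h2 (Fin.ext h)
    have hv1 : (g.1 : ℕ) ≠ 1 := fun h => h1 (Fin.ext h)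
    apply Fin.ext
    simp only [Fin.val_zero]
    omega
  cases hb : g.2 with
  | false =>
      rw [gsub_gx _ h0 hb, gsub_gx _ h0 hb, if_neg (Nat.succ_ne_zero k), zero_add, map_add,
        del_X, del_ite_one, zero_add]
  | true =>
      rw [gsub_bx _ h0 hb, gsub_bx _ h0 hb, if_neg (Nat.succ_ne_zero k), smul_zero, del_ite_one]

lemma phi_del (p : Pring) : phi (Del p) = Del (phi p) := by
  induction p using MvPolynomial.induction_on with
  | C a =>
      rw [del_C, map_zero, show phi (C a) = C a from algHom_C _ _, del_C]
  | add p q hp hq =>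
      rw [map_add, map_add, map_add, hp, hq, map_add]
  | mul_X p i hp =>
      rw [Derivation.leibniz, map_add, smul_eq_mul, smul_eq_mul, map_mul, map_mul, map_mul,
        phi_del_X, hp, Derivation.leibniz, smul_eq_mul, smul_eq_mul]

lemma phi_iter_del (k : ℕ) (p : Pring) : phi (Del^[k] p) = Del^[k] (phi p) := by
  induction k generalizing p with
  | zero => rfl
  | succ k ih =>
      rw [Function.iterate_succ_apply, Function.iterate_succ_apply, ih, phi_del]

/-! ### Computation of the images of the `τ`s -/

lemma phi_tau (u : Fin 3) (k : ℕ) : phi (tau u k) = Del^[k] (phi (tau0 u)) := by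
  have h : tau u k = Del^[k] (tau0 u) := rfl
  rw [h, phi_iter_del]

lemma phi_Beta00 : phi (Beta 0 0) = 1 := by
  rw [show Beta 0 0 = X ((0, true), 0) from rfl,
    show phi (X ((0, true), 0)) = gsub ((0, true), 0) from aeval_X _ _,
    gsub_bx _ rfl rfl, if_pos rfl]

lemma phi_Beta1 (k : ℕ) : phi (Beta 1 k) = 0 := by
  rw [show Beta 1 k = X ((1, true), k) from rfl,
    show phi (X ((1, true), k)) = gsub ((1, true), k) from aeval_X _ _, gsub_by _ rfl]

lemma phi_Beta2 (k : ℕ) : phi (Beta 2 k) = X ((2, true), k) := by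
  rw [show Beta 2 k = X ((2, true), k) from rfl,
    show phi (X ((2, true), k)) = gsub ((2, true), k) from aeval_X _ _, gsub_bh _ rfl]

lemma phi_Gam00 : phi (Gam 0 0) = 1 + X ((0, false), 0) := by
  rw [show Gam 0 0 = X ((0, false), 0) from rfl,
    show phi (X ((0, false), 0)) = gsub ((0, false), 0) from aeval_X _ _,
    gsub_gx _ rfl rfl, if_pos rfl]

lemma phi_Gam1 (k : ℕ) : phi (Gam 1 k) = 0 := by
  rw [show Gam 1 k = X ((1, false), k) from rfl,
    show phi (X ((1, false), k)) = gsub ((1, false), k) from aeval_X _ _, gsub_by _ rfl]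

lemma phi_Gam2 (k : ℕ) : phi (Gam 2 k) = X ((2, false), k) := by
  rw [show Gam 2 k = X ((2, false), k) from rfl,
    show phi (X ((2, false), k)) = gsub ((2, false), k) from aeval_X _ _, gsub_bh _ rfl]

lemma hseed0 : phi (tau0 0) = (2 : ℂ) • X ((2, false), 0) := by
  have h : tau0 0 = 2 * Beta 0 0 * Gam 2 0 - Beta 2 0 * Gam 1 0 := rfl
  rw [h]
  simp only [map_sub, map_mul, map_ofNat, phi_Beta00, phi_Beta2, phi_Gam1, phi_Gam2]
  rw [MvPolynomial.smul_eq_C_mul, map_ofNat]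
  ring

lemma hseed1 : phi (tau0 1) = X ((2, true), 0) + X ((2, true), 0) * X ((0, false), 0) := by
  have h : tau0 1 = -2 * Beta 1 0 * Gam 2 0 + Beta 2 0 * Gam 0 0 := rfl
  rw [h]
  simp only [map_add, map_mul, phi_Beta1, phi_Beta2, phi_Gam2, phi_Gam00]
  ring

lemma hseed2 : phi (tau0 2) = C (-2 : ℂ) + (-2 : ℂ) • X ((0, false), 0) := by
  have h : tau0 2 = -2 * Beta 0 0 * Gam 0 0 + 2 * Beta 1 0 * Gam 1 0 := rfl
  rw [h]
  simp only [map_add, map_mul, map_neg, map_ofNat, phi_Beta00, phi_Beta1, phi_Gam00, phi_Gam1]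
  rw [MvPolynomial.smul_eq_C_mul, map_neg, map_ofNat]
  ring

/-! ### The explicit image family -/

noncomputable def slotF : Fin 3 → Fin 3 × Bool := ![(2, false), (2, true), (0, false)]

noncomputable def iotaF : Fin 3 × ℕ → PGen := fun i => (slotF i.1, i.2)

noncomputable def lamF : Fin 3 × ℕ → ℂ := fun i => (![2, 1, -2] i.1) * FF 0 i.2

noncomputable def qq (k : ℕ) : Pring :=
  Del^[k] (X ((2, true), 0) * X ((0, false), 0) : Pring)

noncomputable def QF : Fin 3 × ℕ → Pring := fun i => if i.1 = 1 then qq i.2 else 0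

noncomputable def eF : Fin 3 × ℕ → ℂ := fun i => if i.1 = 2 ∧ i.2 = 0 then (-2 : ℂ) else 0

lemma iotaF_inj : Function.Injective iotaF := by
  have hslot : Function.Injective slotF := by decide
  intro a b h
  obtain ⟨u, k⟩ := a
  obtain ⟨u', k'⟩ := b
  rw [iotaF, iotaF, Prod.mk.injEq] at h
  obtain ⟨h1, h2⟩ := h
  rw [Prod.mk.injEq]
  exact ⟨hslot h1, h2⟩

lemma lamF_ne : ∀ i, lamF i ≠ 0 := by
  intro ⟨u, k⟩
  have h2 : (![2, 1, -2] u : ℂ) ≠ 0 := by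
    fin_cases u <;> norm_num
  exact mul_ne_zero h2 (FF_ne 0 k)

lemma qq_mdeg (k : ℕ) : MDeg 2 (qq k) := by
  induction k with
  | zero =>
      have h := mdeg_mul (mdeg_X (τ := PGen) ((2, true), 0)) (mdeg_X (τ := PGen) ((0, false), 0))
      exact h
  | succ k ih =>
      rw [qq, Function.iterate_succ_apply']
      exact del_mdeg ih

lemma QF_mdeg : ∀ i, MDeg 2 (QF i) := by
  intro ⟨u, k⟩
  by_cases h : u = 1
  · simp only [QF, if_pos h]
    exact qq_mdeg k
  · simp only [QF, if_neg h]
    exact mdeg_zero 2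

/-! ### The three image computations -/

lemma case0 (k : ℕ) : phi (tau 0 k)
    = (lamF (0, k) • X (iotaF (0, k)) + QF (0, k)) + C (eF (0, k)) := by
  have hQ : QF (0, k) = 0 := by simp [QF]
  have he : eF (0, k) = 0 := by simp [eF]
  have hlam : lamF (0, k) = 2 * FF 0 k := by simp [lamF]
  have hiota : iotaF (0, k) = ((2, false), k) := rfl
  rw [phi_tau, hseed0, iter_del_smul, iter_del_X, hQ, he, hlam, hiota, map_zero, add_zero,
    add_zero, smul_smul, Nat.zero_add]

lemma case1 (k : ℕ) : phi (tau 1 k)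
    = (lamF (1, k) • X (iotaF (1, k)) + QF (1, k)) + C (eF (1, k)) := by
  have hQ : QF (1, k) = qq k := by simp [QF]
  have he : eF (1, k) = 0 := by simp [eF]
  have hlam : lamF (1, k) = FF 0 k := by simp [lamF]
  have hiota : iotaF (1, k) = ((2, true), k) := rfl
  rw [phi_tau, hseed1, iter_del_add, iter_del_X, hQ, he, hlam, hiota, map_zero, add_zero,
    Nat.zero_add]
  rfl

lemma case2 (k : ℕ) : phi (tau 2 k)
    = (lamF (2, k) • X (iotaF (2, k)) + QF (2, k)) + C (eF (2, k)) := by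
  have hQ : QF (2, k) = 0 := by simp [QF]
  have he : (C (eF (2, k)) : Pring) = if k = 0 then C (-2 : ℂ) else 0 := by
    by_cases h : k = 0
    · simp [eF, h]
    · simp [eF, h]
  have hlam : lamF (2, k) = -2 * FF 0 k := by simp [lamF]
  have hiota : iotaF (2, k) = ((0, false), k) := rfl
  rw [phi_tau, hseed2, iter_del_add, iter_del_C, iter_del_smul, iter_del_X, hQ, he, hlam,
    hiota, add_zero, smul_smul, Nat.zero_add, add_comm]

end Stmt4Aux

open Stmt4Aux in
/-- the polynomials `τ^u_k` (`u ∈ {x,y,h}`, `k ≥ 0`) are algebraically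
independent over `ℂ`. -/
theorem stmt4 : AlgebraicIndependent ℂ (fun p : Fin 3 × ℕ => tau p.1 p.2) := by
  apply AlgebraicIndependent.of_comp phi
  have hfun : (⇑phi ∘ fun p : Fin 3 × ℕ => tau p.1 p.2)
      = fun i => (lamF i • X (iotaF i) + QF i) + C (eF i) := by
    funext i
    obtain ⟨u, k⟩ := i
    fin_cases u
    · exact case0 k
    · exact case1 k
    · exact case2 k
  rw [hfun]
  exact shift_indep _ _ (main_indep iotaF_inj lamF_ne QF_mdeg)
end

section
/- Let V be a vertex algebra with a good increasing filtration V_{(0)} ⊂ V_{(1)} ⊂ ... (V_{(0)} = C, a ∘_n b ∈ V_{(k+l)} for n < 0 and a ∘_n b ∈ V_{(k+l-1)} for n ≥ 0 when a ∈ V_{(k)}, b ∈ V_{(l)}). Suppose gr(V) = ⊕_{k≥0} V_{(k)}/V_{(k-1)} is generated as a ∂-ring by homogeneous elements {a_i : i ∈ I}, a_i of degree d_i, and choose vertex operators a_i(z) ∈ V_{(d_i)} projecting to a_i. Then V is strongly generated by {a_i(z) : i ∈ I}, i.e., V is spanned by iterated Wick products :∂^{k_1} a_{i_1}(z) ··· ∂^{k_m}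 a_{i_m}(z): with k_j ≥ 0. -/
/-- The translation operator `∂ a = a ∘_{-2} 1` of a vertex algebra. -/
def Dop {V : Type} [AddCommGroup V] [Module ℂ V]
    (op : ℤ → V →ₗ[ℂ] V →ₗ[ℂ] V) (one : V) : V → V :=
  fun v => op (-2) v one

/-- `Word op one a d w m` holds when `w` is an iterated Wick product
`:∂^{k_1} a_{i_1} ⋯ ∂^{k_r} a_{i_r}:` with `d_{i_1} + ⋯ + d_{i_r} = m`. -/
inductive Word {V : Type} [AddCommGroup V] [Module ℂ V]
    (op : ℤ → V →ₗ[ℂ] V →ₗ[ℂ] V) (one : V) {I : Type} (a : I → V) (d : I → ℕ) :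
    V → ℕ → Prop
  | single (i : I) (k : ℕ) : Word op one a d ((Dop op one)^[k] (a i)) (d i)
  | cons (i : I) (k : ℕ) (v : V) (m : ℕ) :
      Word op one a d v m →
      Word op one a d (op (-1) ((Dop op one)^[k] (a i)) v) (d i + m)

/-- Lemma 3.6: let `V` be a vertex algebra with a good increasing filtration
(`filt`, extended by `⊥` in negative degrees, with `filt 0 = C·1`), whose associated graded ring
is generated as a `∂`-ring by the symbols of vertex operators `a_i(z) ∈ V_{(d_i)}` (this is the
hypothesis `hgen`: every element of `filt m`, `m ≥ 1`, agrees modulo `filt (m-1)` with a linear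
combination of Wick words of degree `m` in the `∂^k a_i`).  Then `V` is strongly generated by
the `a_i(z)`: it is spanned by `1` together with the iterated Wick products
`:∂^{k_1} a_{i_1}(z) ⋯ ∂^{k_r} a_{i_r}(z):`. -/
theorem stmt11 {V : Type} [AddCommGroup V] [Module ℂ V]
    (op : ℤ → V →ₗ[ℂ] V →ₗ[ℂ] V) (one : V)
    (filt : ℤ → Submodule ℂ V)
    (hmono : Monotone filt)
    (hbot : ∀ m : ℤ, m < 0 → filt m = ⊥)
    (hzero : filt 0 = Submodule.span ℂ {one})
    (hexh : ∀ v : V, ∃ k : ℕ, v ∈ filt k)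
    (hneg : ∀ (k l n : ℤ), n < 0 → ∀ a ∈ filt k, ∀ b ∈ filt l, op n a b ∈ filt (k + l))
    (hpos : ∀ (k l n : ℤ), 0 ≤ n → ∀ a ∈ filt k, ∀ b ∈ filt l, op n a b ∈ filt (k + l - 1))
    {I : Type} (a : I → V) (d : I → ℕ)
    (ha : ∀ i, a i ∈ filt (d i))
    (hgen : ∀ m : ℕ, 1 ≤ m → ∀ v ∈ filt (m : ℤ),
      ∃ w ∈ Submodule.span ℂ {x : V | Word op one a d x m}, v - w ∈ filt ((m : ℤ) - 1)) :
    ∀ v : V, v ∈ Submodule.span ℂ ({one} ∪ {x : V | ∃ m : ℕ, Word op one a d x m}) := by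
  have key : ∀ k : ℕ, ∀ v ∈ filt (k : ℤ),
      v ∈ Submodule.span ℂ ({one} ∪ {x : V | ∃ m : ℕ, Word op one a d x m}) := by
    intro k
    induction k using Nat.strong_induction_on with
    | _ k ih =>
      intro v hv
      rcases Nat.eq_zero_or_pos k with rfl | hk
      · rw [Nat.cast_zero, hzero] at hv
        exact Submodule.span_mono Set.subset_union_left hv
      · obtain ⟨w, hw, hvw⟩ := hgen k hk v hv
        have hw' : w ∈ Submodule.span ℂ ({one} ∪ {x : V | ∃ m, Word op one a d x m}) := by
          refine Submodule.span_mono ?_ hw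
          intro x hx
          exact Or.inr ⟨k, hx⟩
        have hcast : (k : ℤ) - 1 = ((k - 1 : ℕ) : ℤ) := by omega
        rw [hcast] at hvw
        have h2 := ih (k - 1) (by omega) _ hvw
        have := Submodule.add_mem _ hw' h2
        simpa using this
  intro v
  obtain ⟨k, hk⟩ := hexh v
  exact key k v hk
end

section
/- Let (V, deg) be a vertex algebra with a good increasing filtration, let k = sup{ j ≥ 1 : V_{(r)} ∘_n V_{(s)} ⊂ V_{(r+s-j)} for all r, s ≥ 0, n ≥ 0 }, and assume k is finite. Then for each a(z) ∈ V of degree d and each n ≥ 0, the rule a(n)_{Der}(b) = φ_{r+d-k}(a(z) ∘_n b(z)) (b homogeneous of degree r in gr(V), b(z) any lift of degree r, φ_m the projection V_{(m)} → V_{(m)}/V_{(m-1)}) is a well-defined derivation of gr(V), homogeneous of degree d - k. -/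
/-- Lemma 3.7: let `(V, deg)` be a vertex algebra with a good increasing
filtration, and let `k = sup{ j ≥ 1 : V_{(r)} ∘_n V_{(s)} ⊆ V_{(r+s-j)} for all r,s and n ≥ 0 }`
be finite (hypotheses `hk1`, `hk`, `hkmax`).  Then for every `a(z) ∈ V` of degree `d` and every
`n ≥ 0`, the rule `a(n)_{Der}(b) = φ_{r+d-k}(a(z) ∘_n b(z))` is a well-defined derivation of
`gr(V)`, homogeneous of degree `d - k`.  Unfolded in terms of the filtration this says: the
value is independent of the chosen lift modulo lower filtration degree (first conclusion), it is
homogeneous of degree `d - k` (third conclusion), and it satisfies the Leibniz rule for the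
commutative product of `gr(V)` induced by the Wick product `∘_{-1}` (second conclusion). -/
theorem stmt12 {V : Type} [AddCommGroup V] [Module ℂ V]
    (op : ℤ → V →ₗ[ℂ] V →ₗ[ℂ] V)
    (filt : ℤ → Submodule ℂ V)
    (hmono : Monotone filt)
    (hbot : ∀ m : ℤ, m < 0 → filt m = ⊥)
    (hwick : ∀ (r s : ℤ), ∀ a ∈ filt r, ∀ b ∈ filt s, op (-1) a b ∈ filt (r + s))
    -- identity (2.7), measuring the failure of positive products to be derivations
    (h27 : ∀ (a b c : V) (n : ℕ),
      op n a (op (-1) b c) - op (-1) (op n a b) c - op (-1) b (op n a c) =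
        ∑ i ∈ Finset.Icc 1 n, (n.choose i : ℂ) •
          op ((i : ℤ) - 1) (op ((n : ℤ) - (i : ℤ)) a b) c)
    (k : ℤ) (hk1 : 1 ≤ k)
    (hk : ∀ (r s : ℤ) (n : ℕ), ∀ a ∈ filt r, ∀ b ∈ filt s, op n a b ∈ filt (r + s - k))
    (hkmax : ¬ ∀ (r s : ℤ) (n : ℕ), ∀ a ∈ filt r, ∀ b ∈ filt s,
      op n a b ∈ filt (r + s - k - 1)) :
    ∀ (d : ℤ) (a : V), a ∈ filt d → ∀ n : ℕ,
      (∀ (r : ℤ) (b b' : V), b ∈ filt r → b' ∈ filt r → b - b' ∈ filt (r - 1) →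
        op n a b - op n a b' ∈ filt (r + d - k - 1)) ∧
      (∀ (r : ℤ) (b : V), b ∈ filt r → op n a b ∈ filt (r + d - k)) ∧
      (∀ (r s : ℤ) (b c : V), b ∈ filt r → c ∈ filt s →
        op n a (op (-1) b c) - op (-1) (op n a b) c - op (-1) b (op n a c) ∈
          filt (r + s + d - k - 1)) := by
  intro d a ha n
  refine ⟨?_, ?_, ?_⟩
  · intro r b b' hb hb' hdiff
    have h := hk d (r - 1) n a ha (b - b') hdiff
    have : op n a b - op n a b' = op n a (b - b') := by simp [map_sub]
    rw [this]
    have : d + (r - 1) - k = r + d - k - 1 := by ring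
    rwa [this] at h
  · intro r b hb
    have h := hk d r n a ha b hb
    have : d + r - k = r + d - k := by ring
    rwa [this] at h
  · intro r s b c hb hc
    rw [h27 a b c n]
    apply Submodule.sum_mem
    intro i hi
    simp only [Finset.mem_Icc] at hi
    apply Submodule.smul_mem
    have h1 : ((n : ℤ) - (i : ℤ)) = ((n - i : ℕ) : ℤ) := by omega
    have h2 : ((i : ℤ) - 1) = ((i - 1 : ℕ) : ℤ) := by omega
    rw [h1, h2]
    have hab : op ((n - i : ℕ) : ℤ) a b ∈ filt (d + r - k) := hk d r (n - i) a ha b hb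
    have habc : op ((i - 1 : ℕ) : ℤ) (op ((n - i : ℕ) : ℤ) a b) c ∈
        filt (d + r - k + s - k) := hk (d + r - k) s (i - 1) _ hab c hc
    exact hmono (by omega) habc
end

section
/- Let g be a semisimple finite-dimensional complex Lie algebra and V a finite-dimensional g-module. In the βγ-system S(V), the vertex operator v(z) = Σ_i :β^{x_i}(z) γ^{x'_i}(z): (x_i a basis of V, x'_i the dual basis) lies in the commutant Com(Θ, S(V)), where Θ is the image of O(g, B) in S(V). Moreover v(z) satisfies v(z)v(w) ∼ -dim(V)(z-w)^{-2}, so it generates a Heisenberg vertex algebra of central charge -dim(V) inside the commutant. -/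
/-- A vertex algebra (commutative circle algebra) structure on a complex vector space `V`:
bilinear circle products `∘_n`, a vacuum vector `1`, and the standard identities.  `Dop^[n]` is
the `n`-th derivative `∂^n`. -/
structure VAStruct (V : Type) [AddCommGroup V] [Module ℂ V] where
  op : ℤ → V →ₗ[ℂ] V →ₗ[ℂ] V
  one : V
  unit_left : ∀ (n : ℤ) (a : V), op n one a = if n = -1 then a else 0
  unit_right : ∀ a : V, op (-1) a one = a
  unit_right' : ∀ (a : V) (n : ℤ), 0 ≤ n → op n a one = 0
  locality : ∀ a b : V, ∃ N : ℕ, ∀ n : ℕ, N ≤ n → op n a b = 0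
  deriv_shift : ∀ (a b : V) (n : ℕ),
    (n.factorial : ℂ) • op (-(n : ℤ) - 1) a b = op (-1) ((fun v => op (-2) v one)^[n] a) b
  -- identity (2.6): non-associativity of the Wick product
  assoc : ∀ a b c : V,
    op (-1) (op (-1) a b) c = op (-1) a (op (-1) b c)
      + ∑ᶠ n : ℕ, (((n + 1).factorial : ℂ))⁻¹ •
        (op (-1) ((fun v => op (-2) v one)^[n + 1] a) (op n b c)
          + op (-1) ((fun v => op (-2) v one)^[n + 1] b) (op n a c))
  -- identity (2.7): failure of the positive products to be derivations of the Wick product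
  leibniz : ∀ (a b c : V) (n : ℕ),
    op n a (op (-1) b c) = op (-1) (op n a b) c + op (-1) b (op n a c)
      + ∑ i ∈ Finset.Icc 1 n, (n.choose i : ℂ) •
          op ((i : ℤ) - 1) (op ((n : ℤ) - (i : ℤ)) a b) c
  -- identity (2.8): skew-symmetry, for non-negative modes
  skew : ∀ (a b : V) (n : ℕ),
    op n a b = ∑ᶠ p : ℕ, ((-1 : ℂ)) ^ (p + 1) •
      op ((n : ℤ) - (p : ℤ) - 1) (op p b a) one

attribute [local instance 100] LieRing.ofAssociativeRing

section Aux

lemma aux_derived (g : Type) [LieRing g] [LieAlgebra ℂ g] [LieAlgebra.IsSemisimple ℂ g] :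
    LieAlgebra.derivedSeries ℂ g 1 = ⊤ := by
  rw [eq_top_iff, ← LieAlgebra.IsSemisimple.sSup_atoms_eq_top (R := ℂ) (L := g)]
  apply sSup_le
  intro I hI
  have h := lie_eq_self_of_isAtom_of_nonabelian I hI
    (LieAlgebra.IsSemisimple.non_abelian_of_isAtom I hI)
  calc I = ⁅I, I⁆ := h.symm
    _ ≤ LieAlgebra.derivedSeries ℂ g 1 := by
        rw [LieAlgebra.derivedSeries_def, LieAlgebra.derivedSeriesOfIdeal_succ,
          LieAlgebra.derivedSeriesOfIdeal_zero]
        exact LieSubmodule.mono_lie le_top le_top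

lemma aux_trace {g : Type} [LieRing g] [LieAlgebra ℂ g] [LieAlgebra.IsSemisimple ℂ g]
    {U : Type} [AddCommGroup U] [Module ℂ U]
    (ρ : g →ₗ⁅ℂ⁆ Module.End ℂ U) (u : g) :
    LinearMap.trace ℂ U (ρ u) = 0 := by
  let χ : LieAlgebra.LieCharacter ℂ g :=
    { toLinearMap := (LinearMap.trace ℂ U).comp (ρ : g →ₗ[ℂ] Module.End ℂ U)
      map_lie' := by
        intro x y
        show LinearMap.trace ℂ U (ρ ⁅x, y⁆) = ⁅_, _⁆
        rw [LieHom.map_lie, LinearMap.trace_lie,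
          LieRing.of_associative_ring_bracket, mul_comm, sub_self] }
  have h : χ u = 0 := LieAlgebra.lieCharacter_apply_of_mem_derived χ
    (by rw [aux_derived]; exact LieSubmodule.mem_top u)
  exact h

end Aux

/-- Lemma 2.13 and Remark 2.14: for `g` semisimple and `V` a finite-dimensional
`g`-module, the vertex operator `v(z) = Σ_i :β^{x_i}(z) γ^{x'_i}(z):` lies in the commutant
`Com(Θ, S(V))`, i.e. `θ^u ∘_n v = 0` for all `u ∈ g` and `n ≥ 0`; moreover
`v(z)v(w) ∼ -dim(V)(z-w)^{-2}`, so `v` generates a Heisenberg vertex algebra of central charge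
`-dim(V)`. -/
theorem stmt15 {S : Type} [AddCommGroup S] [Module ℂ S] (W : VAStruct S)
    {g : Type} [LieRing g] [LieAlgebra ℂ g] [FiniteDimensional ℂ g]
    [LieAlgebra.IsSemisimple ℂ g]
    {U : Type} [AddCommGroup U] [Module ℂ U] {N : ℕ}
    (b : Module.Basis (Fin N) ℂ U)
    (ρ : g →ₗ⁅ℂ⁆ Module.End ℂ U)
    (β : U →ₗ[ℂ] S) (γ : Module.Dual ℂ U →ₗ[ℂ] S)
    (hβγ0 : ∀ (x : U) (x' : Module.Dual ℂ U), W.op 0 (β x) (γ x') = x' x • W.one)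
    (hγβ0 : ∀ (x : U) (x' : Module.Dual ℂ U), W.op 0 (γ x') (β x) = -(x' x) • W.one)
    (hβγn : ∀ (x : U) (x' : Module.Dual ℂ U) (n : ℕ), 1 ≤ n →
      W.op n (β x) (γ x') = 0 ∧ W.op n (γ x') (β x) = 0)
    (hββ : ∀ (x y : U) (n : ℕ), W.op n (β x) (β y) = 0)
    (hγγ : ∀ (x' y' : Module.Dual ℂ U) (n : ℕ), W.op n (γ x') (γ y') = 0)
    (θ : g → S)
    (hθ : ∀ u : g, θ u = -∑ i, W.op (-1) (β (ρ u (b i))) (γ (b.coord i)))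
    (v : S)
    (hv : v = ∑ i, W.op (-1) (β (b i)) (γ (b.coord i))) :
    (∀ (u : g) (n : ℕ), W.op n (θ u) v = 0) ∧
    W.op 1 v v = -((N : ℂ) • W.one) ∧
    W.op 0 v v = 0 ∧
    (∀ n : ℕ, 2 ≤ n → W.op n v v = 0) := by
  classical
  -- β_x acting on a quadratic :β_y γ_{y'}:
  have hβA : ∀ (x y : U) (y' : Module.Dual ℂ U) (p : ℕ),
      W.op p (β x) (W.op (-1) (β y) (γ y')) = if p = 0 then y' x • β y else 0 := by
    intro x y y' p
    rw [W.leibniz, hββ x y p, map_zero, LinearMap.zero_apply, zero_add,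
      Finset.sum_eq_zero, add_zero]
    · rcases Nat.eq_zero_or_pos p with hp | hp
      · subst hp
        rw [if_pos rfl]
        have h0 : W.op ((0 : ℕ) : ℤ) (β x) (γ y') = y' x • W.one := by
          rw [Nat.cast_zero]; exact hβγ0 x y'
        rw [h0, map_smul, W.unit_right]
      · rw [if_neg (Nat.pos_iff_ne_zero.mp hp), (hβγn x y' p hp).1, map_zero]
    · intro i hi
      obtain ⟨h1, h2⟩ := Finset.mem_Icc.mp hi
      have hc : (p : ℤ) - (i : ℤ) = ((p - i : ℕ) : ℤ) := by omega
      rw [hc, hββ, map_zero, LinearMap.zero_apply, smul_zero]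
  -- γ_{x'} acting on a quadratic
  have hγA : ∀ (x' : Module.Dual ℂ U) (y : U) (y' : Module.Dual ℂ U) (p : ℕ),
      W.op p (γ x') (W.op (-1) (β y) (γ y')) = if p = 0 then (-(x' y)) • γ y' else 0 := by
    intro x' y y' p
    rw [W.leibniz, hγγ x' y' p, map_zero, add_zero]
    rcases Nat.eq_zero_or_pos p with hp | hp
    · subst hp
      rw [if_pos rfl, Finset.Icc_eq_empty (by norm_num), Finset.sum_empty, add_zero]
      have h0 : W.op ((0 : ℕ) : ℤ) (γ x') (β y) = -(x' y) • W.one := by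
        rw [Nat.cast_zero]; exact hγβ0 y x'
      rw [h0, map_smul, LinearMap.smul_apply]
      have h1 : W.op (-1) W.one (γ y') = γ y' := by rw [W.unit_left]; simp
      rw [h1]
    · rw [if_neg (Nat.pos_iff_ne_zero.mp hp), (hβγn y x' p hp).2, map_zero,
        LinearMap.zero_apply, zero_add, Finset.sum_eq_zero]
      intro i hi
      obtain ⟨h1, h2⟩ := Finset.mem_Icc.mp hi
      rcases lt_or_eq_of_le h2 with hlt | rfl
      · have hc : (p : ℤ) - (i : ℤ) = ((p - i : ℕ) : ℤ) := by omega
        rw [hc, (hβγn y x' (p - i) (by omega)).2, map_zero, LinearMap.zero_apply, smul_zero]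
      · have hc : (i : ℤ) - (i : ℤ) = ((0 : ℕ) : ℤ) := by omega
        rw [hc, Nat.cast_zero, hγβ0, map_smul, LinearMap.smul_apply]
        have h1 : W.op ((i : ℤ) - 1) W.one (γ y') = 0 := by
          rw [W.unit_left, if_neg (by omega)]
        rw [h1, smul_zero, smul_zero]
  -- β_x acting on v
  have hβv : ∀ (x : U) (p : ℕ), W.op p (β x) v = if p = 0 then β x else 0 := by
    intro x p
    rw [hv, map_sum]
    rcases Nat.eq_zero_or_pos p with hp | hp
    · subst hp
      rw [if_pos rfl]
      have : ∀ i, W.op ((0 : ℕ) : ℤ) (β x) (W.op (-1) (β (b i)) (γ (b.coord i)))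
          = (b.coord i) x • β (b i) := fun i => by rw [hβA]; simp
      rw [Finset.sum_congr rfl fun i _ => this i]
      calc ∑ i, (b.coord i) x • β (b i) = β (∑ i, (b.coord i) x • b i) := by
            rw [map_sum]; simp [map_smul]
        _ = β x := by
            congr 1
            simp only [Module.Basis.coord_apply]
            exact b.sum_repr x
    · rw [if_neg (Nat.pos_iff_ne_zero.mp hp), Finset.sum_eq_zero]
      intro i _
      rw [hβA, if_neg (Nat.pos_iff_ne_zero.mp hp)]
  -- γ_{x'} acting on v
  have hγv : ∀ (x' : Module.Dual ℂ U) (p : ℕ),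
      W.op p (γ x') v = if p = 0 then -γ x' else 0 := by
    intro x' p
    rw [hv, map_sum]
    rcases Nat.eq_zero_or_pos p with hp | hp
    · subst hp
      rw [if_pos rfl]
      have : ∀ i, W.op ((0 : ℕ) : ℤ) (γ x') (W.op (-1) (β (b i)) (γ (b.coord i)))
          = (-(x' (b i))) • γ (b.coord i) := fun i => by rw [hγA, if_pos rfl]
      rw [Finset.sum_congr rfl fun i _ => this i]
      calc ∑ i, (-(x' (b i))) • γ (b.coord i) = γ (∑ i, (-(x' (b i))) • b.coord i) := by
            rw [map_sum]; simp [map_smul]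
        _ = -γ x' := by
            rw [show (∑ i, (-(x' (b i))) • b.coord i) = -(∑ i, x' (b i) • b.coord i) by
                simp [neg_smul, Finset.sum_neg_distrib],
              b.sum_dual_apply_smul_coord, map_neg]
    · rw [if_neg (Nat.pos_iff_ne_zero.mp hp), Finset.sum_eq_zero]
      intro i _
      rw [hγA, if_neg (Nat.pos_iff_ne_zero.mp hp)]
  -- v acting on β_x (via skew symmetry)
  have hvβ : ∀ (x : U) (n : ℕ), W.op n v (β x) = if n = 0 then -β x else 0 := by
    intro x n
    rw [W.skew, finsum_eq_single _ 0 (fun p hp => by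
      rw [hβv, if_neg hp, map_zero, LinearMap.zero_apply, smul_zero])]
    rw [hβv, if_pos rfl]
    rcases Nat.eq_zero_or_pos n with hn | hn
    · subst hn
      rw [if_pos rfl]
      have hc : ((0 : ℕ) : ℤ) - ((0 : ℕ) : ℤ) - 1 = -1 := by omega
      rw [hc, W.unit_right]
      simp
    · rw [if_neg (Nat.pos_iff_ne_zero.mp hn), W.unit_right' _ _ (by omega), smul_zero]
  -- v acting on γ_{x'}
  have hvγ : ∀ (x' : Module.Dual ℂ U) (n : ℕ),
      W.op n v (γ x') = if n = 0 then γ x' else 0 := by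
    intro x' n
    rw [W.skew, finsum_eq_single _ 0 (fun p hp => by
      rw [hγv, if_neg hp, map_zero, LinearMap.zero_apply, smul_zero])]
    rw [hγv, if_pos rfl, map_neg, LinearMap.neg_apply]
    rcases Nat.eq_zero_or_pos n with hn | hn
    · subst hn
      rw [if_pos rfl]
      have hc : ((0 : ℕ) : ℤ) - ((0 : ℕ) : ℤ) - 1 = -1 := by omega
      rw [hc, W.unit_right]
      simp
    · rw [if_neg (Nat.pos_iff_ne_zero.mp hn), W.unit_right' _ _ (by omega), neg_zero, smul_zero]
  -- v acting on a quadratic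
  have hvA : ∀ (y : U) (y' : Module.Dual ℂ U) (n : ℕ),
      W.op n v (W.op (-1) (β y) (γ y')) = if n = 1 then (-(y' y)) • W.one else 0 := by
    intro y y' n
    rw [W.leibniz, hvβ, hvγ]
    rcases Nat.eq_zero_or_pos n with hn | hn
    · subst hn
      rw [if_pos rfl, if_pos rfl, if_neg (by norm_num), Finset.Icc_eq_empty (by norm_num),
        Finset.sum_empty, add_zero, map_neg, LinearMap.neg_apply, neg_add_cancel]
    · rw [if_neg (Nat.pos_iff_ne_zero.mp hn), if_neg (Nat.pos_iff_ne_zero.mp hn),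
        map_zero, LinearMap.zero_apply, map_zero, zero_add, zero_add,
        Finset.sum_eq_single_of_mem n (Finset.mem_Icc.mpr ⟨hn, le_refl n⟩)]
      · have hc : (n : ℤ) - (n : ℤ) = ((0 : ℕ) : ℤ) := by omega
        rw [hc, hvβ, if_pos rfl, Nat.choose_self, Nat.cast_one, one_smul,
          map_neg, LinearMap.neg_apply]
        rcases Nat.lt_or_ge n 2 with hn2 | hn2
        · have hn1 : n = 1 := by omega
          subst hn1
          rw [if_pos rfl]
          have hc1 : ((1 : ℕ) : ℤ) - 1 = (0 : ℤ) := by omega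
          rw [hc1, hβγ0, neg_smul]
        · rw [if_neg (by omega)]
          have hc1 : (n : ℤ) - 1 = ((n - 1 : ℕ) : ℤ) := by omega
          rw [hc1, (hβγn y y' (n - 1) (by omega)).1, neg_zero]
      · intro i hi hin
        obtain ⟨h1, h2⟩ := Finset.mem_Icc.mp hi
        have hc : (n : ℤ) - (i : ℤ) = ((n - i : ℕ) : ℤ) := by omega
        rw [hc, hvβ, if_neg (by omega), map_zero, LinearMap.zero_apply, smul_zero]
  -- a quadratic acting on v (via skew symmetry)
  have hAv : ∀ (y : U) (y' : Module.Dual ℂ U) (n : ℕ),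
      W.op n (W.op (-1) (β y) (γ y')) v = if n = 1 then (-(y' y)) • W.one else 0 := by
    intro y y' n
    rw [W.skew, finsum_eq_single _ 1 (fun p hp => by
      rw [hvA, if_neg hp, map_zero, LinearMap.zero_apply, smul_zero])]
    rw [hvA, if_pos rfl, map_smul, LinearMap.smul_apply, W.unit_left]
    rcases eq_or_ne n 1 with hn | hn
    · subst hn
      rw [if_pos rfl, if_pos (by norm_num)]
      norm_num
    · rw [if_neg hn, if_neg (by omega)]
      simp
  -- v ∘ₙ v
  have hvv : ∀ n : ℕ, W.op n v v = if n = 1 then -((N : ℂ) • W.one) else 0 := by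
    intro n
    nth_rewrite 2 [hv]
    rw [map_sum]
    have hrw : ∀ i : Fin N, W.op n v (W.op (-1) (β (b i)) (γ (b.coord i)))
        = if n = 1 then (-(1 : ℂ)) • W.one else 0 := by
      intro i
      rw [hvA]
      congr 2
      simp [Module.Basis.coord_apply]
    rw [Finset.sum_congr rfl fun i _ => hrw i]
    rcases eq_or_ne n 1 with hn | hn
    · subst hn
      rw [if_pos rfl, if_pos rfl, Finset.sum_const, Finset.card_univ, Fintype.card_fin]
      rw [← Nat.cast_smul_eq_nsmul ℂ, smul_smul]
      simp
    · rw [if_neg hn, if_neg hn, Finset.sum_const, smul_zero]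
  -- trace of ρ u vanishes
  have htr : ∀ u : g, ∑ i, (b.coord i) ((ρ u) (b i)) = 0 := by
    intro u
    have h1 : LinearMap.trace ℂ U (ρ u) = 0 := aux_trace ρ u
    rw [LinearMap.trace_eq_matrix_trace ℂ b] at h1
    simpa [Matrix.trace, Matrix.diag, LinearMap.toMatrix_apply, Module.Basis.coord_apply] using h1
  refine ⟨?_, ?_, ?_, ?_⟩
  · intro u n
    rw [hθ, map_neg, LinearMap.neg_apply, map_sum, LinearMap.sum_apply]
    rw [Finset.sum_congr rfl fun i _ => hAv (ρ u (b i)) (b.coord i) n]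
    rcases eq_or_ne n 1 with hn | hn
    · subst hn
      simp only [if_pos rfl, if_true]
      rw [← Finset.sum_smul, Finset.sum_neg_distrib, htr u, neg_zero, zero_smul, neg_zero]
    · simp [hn]
  · have h := hvv 1
    rw [if_pos rfl] at h
    rw [show (1 : ℤ) = ((1 : ℕ) : ℤ) by norm_num]
    exact h
  · have h := hvv 0
    rw [if_neg (by norm_num)] at h
    rw [show (0 : ℤ) = ((0 : ℕ) : ℤ) by norm_num]
    exact h
  · intro n hn
    rw [hvv n, if_neg (by omega)]
end
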